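/- arXiv:2110.04915 — 2 statements merged into one kernel-verified Lean document; each statement's English description precedes it below -/
import Mathlib

section
/- Let T = (G, s, b) be a based matrix and 𝔠 a partition of G with {s} ∈ 𝔠. Define the relation on G∖{s}: g₁ ≃ g₂ iff g₁ - g₂ ∈ Ann(𝔠) or g₁ + g₂ ∈ Ann(𝔠). Then ≃ is an equivalence relation on G∖{s}. -/
open scoped Classical

noncomputable section

variable {G H : Type*} [Fintype G] [AddCommGroup H]

def blockSum (b : G → G → H) (g : G) (C : Set G) : H :=
  ∑ h ∈ C.toFinset, b g h

def pairBlock (b : G → G → H) (v : G → ℤ) (C : Set G) : H :=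
  ∑ g : G, v g • blockSum b g C

def Ann (s : G) (b : G → G → H) (c : Set (Set G)) : Set (G → ℤ) :=
  {v | v s = 0 ∧ ∃ k : ℤ, ∀ C ∈ c, pairBlock b v C = k • blockSum b s C}

def basisVec (g : G) : G → ℤ := fun h => if h = g then 1 else 0

def relAnn (s : G) (b : G → G → H) (c : Set (Set G)) (g₁ g₂ : G) : Prop :=
  basisVec g₁ - basisVec g₂ ∈ Ann s b c ∨ basisVec g₁ + basisVec g₂ ∈ Ann s b c

def derived (s : G) (b : G → G → H) (c : Set (Set G)) : Set (Set G) :=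
  insert {s} {C | ∃ g, g ≠ s ∧ C = {g' | g' ≠ s ∧ relAnn s b c g g'}}

def Finer (c c' : Set (Set G)) : Prop :=
  ∀ C' ∈ c', ∃ S ⊆ c, C' = ⋃₀ S

def iterDerived (s : G) (b : G → G → H) : ℕ → Set (Set G)
  | 0 => {C | ∃ g : G, C = {g}}
  | n + 1 => derived s b (iterDerived s b n)


lemma pairBlock_add (b : G → G → H) (v w : G → ℤ) (C : Set G) :
    pairBlock b (v + w) C = pairBlock b v C + pairBlock b w C := by
  simp [pairBlock, add_smul, Finset.sum_add_distrib]

lemma pairBlock_neg (b : G → G → H) (v : G → ℤ) (C : Set G) :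
    pairBlock b (-v) C = - pairBlock b v C := by
  simp [pairBlock, neg_smul, Finset.sum_neg_distrib]

lemma Ann_zero (s : G) (b : G → G → H) (c : Set (Set G)) : (0 : G → ℤ) ∈ Ann s b c := by
  refine ⟨rfl, 0, fun C hC => ?_⟩
  simp [pairBlock]

lemma Ann_add {s : G} {b : G → G → H} {c : Set (Set G)} {v w : G → ℤ}
    (hv : v ∈ Ann s b c) (hw : w ∈ Ann s b c) : v + w ∈ Ann s b c := by
  obtain ⟨hv0, k, hk⟩ := hv
  obtain ⟨hw0, l, hl⟩ := hw
  refine ⟨by simp [hv0, hw0], k + l, fun C hC => ?_⟩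
  rw [pairBlock_add, hk C hC, hl C hC, add_smul]

lemma Ann_neg {s : G} {b : G → G → H} {c : Set (Set G)} {v : G → ℤ}
    (hv : v ∈ Ann s b c) : -v ∈ Ann s b c := by
  obtain ⟨hv0, k, hk⟩ := hv
  refine ⟨by simp [hv0], -k, fun C hC => ?_⟩
  rw [pairBlock_neg, hk C hC, neg_smul]

lemma Ann_sub {s : G} {b : G → G → H} {c : Set (Set G)} {v w : G → ℤ}
    (hv : v ∈ Ann s b c) (hw : w ∈ Ann s b c) : v - w ∈ Ann s b c := by
  rw [sub_eq_add_neg]; exact Ann_add hv (Ann_neg hw)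

/-- The relation g₁ ≃ g₂ ⇔ g₁ - g₂ ∈ Ann(𝔠) or g₁ + g₂ ∈ Ann(𝔠)
is an equivalence relation on G∖{s}. -/
theorem relAnn_equivalence (s : G) (b : G → G → H)
    (skew : ∀ g h : G, b h g = - b g h)
    (c : Set (Set G))
    (hc : Setoid.IsPartition c) (hs : {s} ∈ c) :
    Equivalence (fun x y : {g : G // g ≠ s} => relAnn s b c x.1 y.1) := by
  constructor
  · intro x
    left
    have : basisVec x.1 - basisVec x.1 = 0 := sub_self _
    rw [this]
    exact Ann_zero s b c
  · intro x y h
    rcases h with h | h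
    · left
      have : basisVec y.1 - basisVec x.1 = -(basisVec x.1 - basisVec y.1) := by ring
      rw [this]
      exact Ann_neg h
    · right
      rwa [add_comm]
  · intro x y z hxy hyz
    rcases hxy with h1 | h1 <;> rcases hyz with h2 | h2
    · left
      have : basisVec x.1 - basisVec z.1 =
          (basisVec x.1 - basisVec y.1) + (basisVec y.1 - basisVec z.1) := by ring
      rw [this]; exact Ann_add h1 h2
    · right
      have : basisVec x.1 + basisVec z.1 =
          (basisVec x.1 - basisVec y.1) + (basisVec y.1 + basisVec z.1) := by ring
      rw [this]; exact Ann_add h1 h2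
    · right
      have : basisVec x.1 + basisVec z.1 =
          (basisVec x.1 + basisVec y.1) - (basisVec y.1 - basisVec z.1) := by ring
      rw [this]; exact Ann_sub h1 h2
    · left
      have : basisVec x.1 - basisVec z.1 =
          (basisVec x.1 + basisVec y.1) - (basisVec y.1 + basisVec z.1) := by ring
      rw [this]; exact Ann_sub h1 h2
end
end

section
/- Let T = (G, s, b) be a based matrix and 𝔠, 𝔠' partitions of G with {s} ∈ 𝔠 ∩ 𝔠'. If 𝔠 is finer than 𝔠', then the derived partition A𝔠 is finer than A𝔠', where A𝔠 consists of {s} together with the equivalence classes of the relation g₁ ≃ g₂ ⇔ (g₁ - g₂ ∈ Ann(𝔠) or g₁ + g₂ ∈ Ann(𝔠)) on G∖{s}. -/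
open scoped Classical

noncomputable section

variable {G H : Type*} [Fintype G] [AddCommGroup H]

lemma relAnn_refl (s : G) (b : G → G → H) (c : Set (Set G)) (g : G) :
    relAnn s b c g g :=
  Or.inl (by rw [sub_self]; exact Ann_zero s b c)

lemma relAnn_trans {s : G} {b : G → G → H} {c : Set (Set G)} {g₁ g₂ g₃ : G}
    (h12 : relAnn s b c g₁ g₂) (h23 : relAnn s b c g₂ g₃) :
    relAnn s b c g₁ g₃ := by
  rcases h12 with h | h <;> rcases h23 with h' | h'
  · refine Or.inl ?_
    have e : basisVec g₁ - basisVec g₃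
        = (basisVec g₁ - basisVec g₂) + (basisVec g₂ - basisVec g₃) := by abel
    rw [e]; exact Ann_add h h'
  · refine Or.inr ?_
    have e : basisVec g₁ + basisVec g₃
        = (basisVec g₁ - basisVec g₂) + (basisVec g₂ + basisVec g₃) := by abel
    rw [e]; exact Ann_add h h'
  · refine Or.inr ?_
    have e : basisVec g₁ + basisVec g₃
        = (basisVec g₁ + basisVec g₂) - (basisVec g₂ - basisVec g₃) := by abel
    rw [e]; exact Ann_sub h h'
  · refine Or.inl ?_
    have e : basisVec g₁ - basisVec g₃
        = (basisVec g₁ + basisVec g₂) - (basisVec g₂ + basisVec g₃) := by abel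
    rw [e]; exact Ann_sub h h'

lemma partition_pairwiseDisjoint {c : Set (Set G)} (hc : Setoid.IsPartition c) :
    c.PairwiseDisjoint id := by
  intro C hC D hD hne
  refine Set.disjoint_left.mpr fun x hxC hxD => hne ?_
  obtain ⟨B, _, hu⟩ := hc.2 x
  exact (hu C ⟨hC, hxC⟩).trans (hu D ⟨hD, hxD⟩).symm

lemma blockSum_sUnion (b : G → G → H) (g : G) (S : Set (Set G))
    (hd : S.PairwiseDisjoint id) :
    blockSum b g (⋃₀ S) = ∑ C ∈ (Set.toFinite S).toFinset, blockSum b g C := by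
  unfold blockSum
  rw [← Finset.sum_biUnion]
  · congr 1
    ext x
    simp only [Set.mem_toFinset, Set.Finite.mem_toFinset, Finset.mem_biUnion,
      Set.mem_sUnion]
  · intro C hC D hD hne
    simp only [Finset.mem_coe, Set.Finite.mem_toFinset] at hC hD
    have := hd hC hD hne
    rw [Function.onFun, Finset.disjoint_left]
    intro a ha hb
    rw [Set.mem_toFinset] at ha hb
    exact Set.disjoint_left.mp this ha hb

lemma Ann_mono {s : G} {b : G → G → H} {c c' : Set (Set G)}
    (hc : Setoid.IsPartition c) (hf : Finer c c') :
    Ann s b c ⊆ Ann s b c' := by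
  rintro v ⟨hv0, k, hk⟩
  refine ⟨hv0, k, fun C' hC' => ?_⟩
  obtain ⟨S, hSc, rfl⟩ := hf C' hC'
  have hd : S.PairwiseDisjoint id := (partition_pairwiseDisjoint hc).subset hSc
  calc pairBlock b v (⋃₀ S)
      = ∑ g : G, v g • ∑ C ∈ (Set.toFinite S).toFinset, blockSum b g C := by
        unfold pairBlock; simp_rw [blockSum_sUnion b _ S hd]
    _ = ∑ C ∈ (Set.toFinite S).toFinset, ∑ g : G, v g • blockSum b g C := by
        simp_rw [Finset.smul_sum]; exact Finset.sum_comm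
    _ = ∑ C ∈ (Set.toFinite S).toFinset, k • blockSum b s C := by
        refine Finset.sum_congr rfl fun C hCmem => ?_
        exact hk C (hSc ((Set.Finite.mem_toFinset _).mp hCmem))
    _ = k • ∑ C ∈ (Set.toFinite S).toFinset, blockSum b s C := by
        rw [Finset.smul_sum]
    _ = k • blockSum b s (⋃₀ S) := by rw [blockSum_sUnion b _ S hd]

/-- If 𝔠 is finer than 𝔠' then the derived partition A𝔠 is finer
than A𝔠'.  Since the blocks of a derived partition are {s} together with the
equivalence classes of the relation ≃, this is expressed by the inclusion of
the relations on G∖{s}, together with fineness of the derived partitions. -/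
theorem derived_finer_of_finer (s : G) (b : G → G → H)
    (skew : ∀ g h : G, b h g = - b g h)
    (c c' : Set (Set G))
    (hc : Setoid.IsPartition c) (hc' : Setoid.IsPartition c')
    (hs : {s} ∈ c) (hs' : {s} ∈ c')
    (hf : Finer c c') :
    (∀ g₁ g₂ : G, g₁ ≠ s → g₂ ≠ s →
      relAnn s b c g₁ g₂ → relAnn s b c' g₁ g₂) ∧
    Finer (derived s b c) (derived s b c') := by
  have hAnn : Ann s b c ⊆ Ann s b c' := Ann_mono hc hf
  have hrel : ∀ g₁ g₂ : G, relAnn s b c g₁ g₂ → relAnn s b c' g₁ g₂ := by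
    intro g₁ g₂ h
    rcases h with h | h
    · exact Or.inl (hAnn h)
    · exact Or.inr (hAnn h)
  refine ⟨fun g₁ g₂ _ _ => hrel g₁ g₂, ?_⟩
  intro C' hC'
  rcases hC' with h | ⟨g, hg, rfl⟩
  · refine ⟨{{s}}, ?_, ?_⟩
    · intro D hD
      rw [Set.mem_singleton_iff] at hD
      rw [hD]
      exact Set.mem_insert _ _
    · rw [h, Set.sUnion_singleton]
  · refine ⟨{D | D ∈ derived s b c ∧ D ⊆ {g' | g' ≠ s ∧ relAnn s b c' g g'}},
      fun D hD => hD.1, ?_⟩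
    ext h
    simp only [Set.mem_sUnion, Set.mem_setOf_eq]
    constructor
    · rintro ⟨hhs, hgh⟩
      refine ⟨{g' | g' ≠ s ∧ relAnn s b c h g'}, ⟨?_, ?_⟩, ⟨hhs, relAnn_refl s b c h⟩⟩
      · exact Set.mem_insert_iff.mpr (Or.inr ⟨h, hhs, rfl⟩)
      · rintro g' ⟨hg's, hhg'⟩
        exact ⟨hg's, relAnn_trans hgh (hrel _ _ hhg')⟩
    · rintro ⟨D, ⟨_, hDsub⟩, hhD⟩
      exact hDsub hhD
end
end
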